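/- arXiv:1311.5845 — 2 statements merged into one kernel-verified Lean document; each statement's English description precedes it below -/
import Mathlib

section
/- For any nonzero partition P, the difficulty satisfies δ(P) ≥ 2·P_0 − |P|, where P_0 is the largest part and |P| is the sum of the parts. -/
/-!
Along a valid sequence of `n` steps from the empty partition, the largest part grows by at most
one per step, so `P 0 ≤ n`, while `|P| = 2 n - c` with `c` the number of 1-linked steps. An
optimal sequence exists because every partition is reached by adding boxes one at a time, each
addition being 1-linked through a singleton progression; for it `δ(P) = 2 n - |P| ≥ 2 P 0 - |P|`.
-/

open scoped Classical

/-- A partition: weakly decreasing, eventually zero sequence of nonnegative integers. -/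
def IsPartition (P : ℕ → ℕ) : Prop :=
  (∀ i, P (i + 1) ≤ P i) ∧ ∃ N, ∀ n ≥ N, P n = 0

/-- An arithmetic progression: a proper subset of ℤ whose set of differences is
closed under addition. -/
def IsAP (Λ : Set ℤ) : Prop :=
  Λ ≠ Set.univ ∧
    ∀ a b c d : ℤ, a ∈ Λ → b ∈ Λ → c ∈ Λ → d ∈ Λ →
      ∃ x ∈ Λ, ∃ y ∈ Λ, x - y = (a - b) + (c - d)

/-- Upward displacement of a partition with respect to an arithmetic progression.
The convention `P_{-1} = ∞` is encoded by the disjunct `i = 0`. -/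
noncomputable def upDisp (P : ℕ → ℕ) (Λ : Set ℤ) : ℕ → ℕ :=
  fun i => if ((P i : ℤ) - i) ∈ Λ ∧ (i = 0 ∨ P i < P (i - 1)) then P i + 1 else P i

/-- Downward displacement of a partition with respect to an arithmetic progression. -/
noncomputable def downDisp (P : ℕ → ℕ) (Λ : Set ℤ) : ℕ → ℕ :=
  fun i => if ((P i : ℤ) - i - 1) ∈ Λ ∧ P (i + 1) < P i then P i - 1 else P i

/-- The sum `|P|` of the parts of a partition. -/
noncomputable def psum (P : ℕ → ℕ) : ℕ := ∑ᶠ i, P i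

/-- Two partitions are linked if some arithmetic progression displaces one to the other. -/
def Linked (P Q : ℕ → ℕ) : Prop :=
  ∃ Λ : Set ℤ, IsAP Λ ∧ Q = upDisp P Λ ∧ P = downDisp Q Λ

/-- `k`-linked: linked with sums differing by `k`. -/
def KLinked (k : ℕ) (P Q : ℕ → ℕ) : Prop :=
  Linked P Q ∧ psum Q = psum P + k

/-- A valid sequence of partitions: adjacent pairs are 1-linked or 2-linked. -/
def ValidSeq (n : ℕ) (s : ℕ → ℕ → ℕ) : Prop :=
  (∀ j ≤ n, IsPartition (s j)) ∧
    ∀ j < n, KLinked 1 (s j) (s (j + 1)) ∨ KLinked 2 (s j) (s (j + 1))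

/-- The difficulty `δ(P)`: the least number of 1-linked adjacent pairs in a valid
sequence from the empty partition to `P`. -/
noncomputable def delta (P : ℕ → ℕ) : ℕ :=
  sInf { c | ∃ n s, ValidSeq n s ∧ s 0 = (fun _ => 0) ∧ s n = P ∧
    c = ((Finset.range n).filter fun j => KLinked 1 (s j) (s (j + 1))).card }

/-- The conjugate (dual) partition: `P*_n = #{m : P_m > n}`. -/
noncomputable def conj (P : ℕ → ℕ) : ℕ → ℕ := fun n => Set.ncard { m | n < P m }

lemma psum_eq_sum_range {P : ℕ → ℕ} {N : ℕ} (hN : ∀ n ≥ N, P n = 0) :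
    psum P = ∑ i ∈ Finset.range N, P i :=
  finsum_eq_sum_of_support_subset P <| Function.support_subset_iff'.2 fun n hn =>
    hN n (by simpa using hn)

lemma psum_zero : psum (fun _ : ℕ => 0) = 0 :=
  finsum_zero

lemma psum_update_succ {P : ℕ → ℕ} {N : ℕ} (hN : ∀ n ≥ N, P n = 0) (i : ℕ) :
    psum (Function.update P i (P i + 1)) = psum P + 1 := by
  have hP : ∀ n ≥ max N (i + 1), P n = 0 := fun n hn => hN n (le_of_max_le_left hn)
  have hQ : ∀ n ≥ max N (i + 1), Function.update P i (P i + 1) n = 0 := fun n hn => by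
    rw [Function.update_of_ne (by omega), hP n hn]
  have hi : i ∈ Finset.range (max N (i + 1)) := Finset.mem_range.2 (by omega)
  rw [psum_eq_sum_range hQ, psum_eq_sum_range hP, Finset.sum_update_of_mem hi,
    Finset.sdiff_singleton_eq_erase, ← Finset.add_sum_erase _ _ hi]
  ring

lemma IsPartition.antitone {P : ℕ → ℕ} (hP : IsPartition P) : Antitone P :=
  antitone_nat_of_succ_le hP.1

lemma isAP_singleton (t : ℤ) : IsAP {t} := by
  refine ⟨Set.singleton_ne_univ t, ?_⟩
  intro a b c d ha hb hc hd
  refine ⟨t, rfl, t, rfl, ?_⟩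
  rw [ha, hb, hc, hd]
  ring

section AddBox

variable {P : ℕ → ℕ} {i : ℕ}

/- `j ↦ P j - j` is strictly decreasing, so the progression `{P i - i}` displaces only row `i`. -/
lemma upDisp_singleton (hP : Antitone P) (hi : i = 0 ∨ P i < P (i - 1)) :
    upDisp P {(P i : ℤ) - i} = Function.update P i (P i + 1) := by
  funext j
  rcases eq_or_ne j i with rfl | hj
  · rw [Function.update_self]
    exact if_pos ⟨rfl, hi⟩
  · rw [Function.update_of_ne hj]
    exact if_neg fun h => by
      have := Set.mem_singleton_iff.1 h.1
      rcases lt_or_gt_of_ne hj with hlt | hgt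
      · have := hP hlt.le; omega
      · have := hP hgt.le; omega

lemma downDisp_singleton (hP : Antitone P) (hi : i = 0 ∨ P i < P (i - 1)) :
    downDisp (Function.update P i (P i + 1)) {(P i : ℤ) - i} = P := by
  funext j
  unfold downDisp
  rcases eq_or_ne j i with rfl | hj
  · have := hP (Nat.le_add_right j 1)
    rw [Function.update_self, Function.update_of_ne (by omega)]
    exact if_pos ⟨Set.mem_singleton_iff.2 (by push_cast; ring), by omega⟩
  · rw [Function.update_of_ne hj]
    exact if_neg fun h => by
      have := Set.mem_singleton_iff.1 h.1
      rcases lt_or_gt_of_ne hj with hlt | hgt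
      · have := hP (Nat.le_sub_one_of_lt hlt)
        have := hi.resolve_left (by omega)
        omega
      · have := hP hgt.le; omega

lemma kLinked_one_update_succ (hP : IsPartition P) (hi : i = 0 ∨ P i < P (i - 1)) :
    KLinked 1 P (Function.update P i (P i + 1)) :=
  ⟨⟨_, isAP_singleton _, (upDisp_singleton hP.antitone hi).symm,
    (downDisp_singleton hP.antitone hi).symm⟩, psum_update_succ hP.2.choose_spec i⟩

end AddBox

lemma Linked.apply_zero_le {P Q : ℕ → ℕ} (h : Linked P Q) : Q 0 ≤ P 0 + 1 := by
  obtain ⟨Λ, -, rfl, -⟩ := h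
  unfold upDisp
  split_ifs <;> omega

section ValidSeq

variable {n : ℕ} {s : ℕ → ℕ → ℕ}

lemma ValidSeq.of_succ (hs : ValidSeq (n + 1) s) : ValidSeq n s :=
  ⟨fun j hj => hs.1 j (by omega), fun j hj => hs.2 j (by omega)⟩

lemma ValidSeq.snoc {Q : ℕ → ℕ} (hs : ValidSeq n s)
    (hQ : IsPartition Q) (h : KLinked 1 (s n) Q ∨ KLinked 2 (s n) Q) :
    ValidSeq (n + 1) (Function.update s (n + 1) Q) := by
  refine ⟨fun j hj => ?_, fun j hj => ?_⟩
  · obtain hj' | rfl := Nat.lt_or_eq_of_le hj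
    · rw [Function.update_of_ne (by omega)]
      exact hs.1 j (by omega)
    · rwa [Function.update_self]
  · rw [Function.update_of_ne (by omega)]
    rcases Nat.lt_or_ge j n with hj' | hj'
    · rw [Function.update_of_ne (by omega)]
      exact hs.2 j hj'
    · obtain rfl : j = n := by omega
      rwa [Function.update_self]

lemma ValidSeq.apply_zero_le (hs : ValidSeq n s) : s n 0 ≤ s 0 0 + n := by
  induction n with
  | zero => simp
  | succ n ih =>
    have hstep : Linked (s n) (s (n + 1)) := (hs.2 n n.lt_succ_self).elim (·.1) (·.1)
    have := ih hs.of_succ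
    have := hstep.apply_zero_le
    omega

lemma ValidSeq.psum_add_card_filter (hs : ValidSeq n s) :
    psum (s n) + ((Finset.range n).filter fun j => KLinked 1 (s j) (s (j + 1))).card =
      psum (s 0) + 2 * n := by
  induction n with
  | zero => simp
  | succ n ih =>
    have := ih hs.of_succ
    rw [Finset.range_add_one, Finset.filter_insert]
    by_cases h1 : KLinked 1 (s n) (s (n + 1))
    · rw [if_pos h1, Finset.card_insert_of_notMem (by simp), h1.2]
      omega
    · have h2 := ((hs.2 n n.lt_succ_self).resolve_left h1).2
      rw [if_neg h1, h2]
      omega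

lemma ValidSeq.two_mul_apply_zero_le (hs : ValidSeq n s) (h0 : s 0 = fun _ => 0) :
    2 * s n 0 ≤
      psum (s n) + ((Finset.range n).filter fun j => KLinked 1 (s j) (s (j + 1))).card := by
  have h1 := hs.apply_zero_le
  have h2 := hs.psum_add_card_filter
  simp only [h0, psum_zero] at h1 h2
  omega

end ValidSeq

section RemoveBox

variable {P : ℕ → ℕ} {i : ℕ}

lemma IsPartition.exists_last_ne_zero (hP : IsPartition P) (h0 : P 0 ≠ 0) :
    ∃ i, P i ≠ 0 ∧ P (i + 1) = 0 := by
  obtain ⟨_, N, hN⟩ := hP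
  have hex : ∃ k, P k = 0 := ⟨N, hN N le_rfl⟩
  have hpos : Nat.find hex ≠ 0 := by rwa [Ne, Nat.find_eq_zero]
  refine ⟨Nat.find hex - 1, Nat.find_min hex (by omega), ?_⟩
  have hsucc : Nat.find hex - 1 + 1 = Nat.find hex := by omega
  exact hsucc ▸ Nat.find_spec hex

lemma IsPartition.update_pred (hP : IsPartition P) (hi : P (i + 1) < P i) :
    IsPartition (Function.update P i (P i - 1)) := by
  obtain ⟨hmono, N, hN⟩ := hP
  refine ⟨fun j => ?_, N, fun n hn => ?_⟩
  · have := hmono j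
    rcases eq_or_ne (j + 1) i with rfl | h1
    · rw [Function.update_self, Function.update_of_ne (by omega)]
      omega
    rcases eq_or_ne j i with rfl | h2
    · rw [Function.update_self, Function.update_of_ne h1]
      omega
    · rwa [Function.update_of_ne h1, Function.update_of_ne h2]
  · rcases eq_or_ne n i with rfl | h
    · simp [hN n hn]
    · rw [Function.update_of_ne h, hN n hn]

lemma update_pred_addable (hP : Antitone P) (hi : P i ≠ 0) :
    i = 0 ∨ Function.update P i (P i - 1) i < Function.update P i (P i - 1) (i - 1) := by
  rcases Nat.eq_zero_or_pos i with h | h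
  · exact Or.inl h
  · have := hP (Nat.sub_le i 1)
    right
    rw [Function.update_self, Function.update_of_ne (by omega)]
    omega

end RemoveBox

theorem IsPartition.exists_validSeq {P : ℕ → ℕ} (hP : IsPartition P) :
    ∃ n s, ValidSeq n s ∧ s 0 = (fun _ => 0) ∧ s n = P := by
  induction h : psum P using Nat.strong_induction_on generalizing P with
  | _ m ih =>
  by_cases h0 : P 0 = 0
  · refine ⟨0, fun _ => P, ⟨fun _ _ => hP, fun j hj => absurd hj (Nat.not_lt_zero j)⟩,
      funext fun j => Nat.eq_zero_of_le_zero (h0 ▸ hP.antitone (Nat.zero_le j)), rfl⟩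
  obtain ⟨i, hi, hi1⟩ := hP.exists_last_ne_zero h0
  have hP' := hP.update_pred (i := i) (by omega)
  have hlink : KLinked 1 (Function.update P i (P i - 1)) P := by
    have := kLinked_one_update_succ hP' (update_pred_addable hP.antitone hi)
    rwa [Function.update_self, Function.update_idem, Nat.sub_add_cancel (by omega),
      Function.update_eq_self] at this
  obtain ⟨n, s, hs, hs0, hsn⟩ := ih _ (by have := hlink.2; omega) hP' rfl
  refine ⟨n + 1, Function.update s (n + 1) P, hs.snoc hP (Or.inl (hsn ▸ hlink)), ?_, ?_⟩
  · rwa [Function.update_of_ne (by omega)]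
  · exact Function.update_self _ _ _

lemma IsPartition.exists_validSeq_card_filter_eq_delta {P : ℕ → ℕ} (hP : IsPartition P) :
    ∃ n s, ValidSeq n s ∧ s 0 = (fun _ => 0) ∧ s n = P ∧
      delta P = ((Finset.range n).filter fun j => KLinked 1 (s j) (s (j + 1))).card := by
  obtain ⟨n, s, hs, h0, hn⟩ := hP.exists_validSeq
  exact Nat.sInf_mem (s := {c | ∃ n s, ValidSeq n s ∧ s 0 = (fun _ => 0) ∧ s n = P ∧
    c = ((Finset.range n).filter fun j => KLinked 1 (s j) (s (j + 1))).card})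
    ⟨_, n, s, hs, h0, hn, rfl⟩

theorem stmt4_general (P : ℕ → ℕ) (hP : IsPartition P) :
    (2 * (P 0 : ℤ) - psum P) ≤ delta P := by
  obtain ⟨n, s, hs, h0, rfl, hδ⟩ := hP.exists_validSeq_card_filter_eq_delta
  have := hs.two_mul_apply_zero_le h0
  rw [hδ]
  omega

/-- Lower bound on the difficulty: `δ(P) ≥ 2 P_0 - |P|` for nonzero `P`. -/
theorem stmt4 (P : ℕ → ℕ) (hP : IsPartition P) (hne : ∃ i, P i ≠ 0) :
    (2 * (P 0 : ℤ) - psum P) ≤ delta P :=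
  stmt4_general P hP
end

section
/- Let a ≥ 2 be an even integer and b ≥ 2. Then δ((a^b)) ≤ a + 2b − 4. -/
open scoped Classical

/-!
Adding one cell at the end of each row in a set `S` is an `|S|`-linked step as soon as some
arithmetic progression contains the contents of exactly those addable cells and of no cell that
becomes removable. Two cells of contents `c` and `c - 2` in adjacent rows are added in one
2-linked step by a ray of step 2 starting at them, so a strip of width two is laid along the
right side of a box `(j^b)` by a diagonal wave: one 1-linked cell in the top row, `b - 1`
2-linked steps, one 1-linked cell in the bottom row. When `b` is odd and `j` even, parity keeps
the ray off the other corners, and `a / 2` strips give `δ((a^b)) ≤ a`. When `b` is even, the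
same wave run along pairs of rows builds `((a-1)^b)` at cost `b`, and the last column costs
`b` more, so `δ((a^b)) ≤ 2b`; for `a = 2` a single strip suffices.
-/

lemma IsPartition.support_finite {P : ℕ → ℕ} (hP : IsPartition P) :
    (Function.support P).Finite := by
  obtain ⟨N, hN⟩ := hP.2
  refine (Set.finite_Iio N).subset fun r hr => ?_
  by_contra h
  exact hr (hN r (not_lt.mp h))

lemma psum_of_addCells {P Q : ℕ → ℕ} {S : Finset ℕ} (hP : (Function.support P).Finite)
    (hQ : ∀ r, Q r = if r ∈ S then P r + 1 else P r) : psum Q = psum P + S.card := by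
  have hQ' : Q = fun r => P r + if r ∈ S then 1 else 0 := by
    funext r; rw [hQ]; split_ifs <;> rfl
  have hS : (Function.support fun r => if r ∈ S then 1 else 0) ⊆ S := fun r hr => by
    by_contra h; exact hr (if_neg h)
  rw [psum, psum, hQ', finsum_add_distrib hP (S.finite_toSet.subset hS),
    finsum_eq_sum_of_support_subset _ hS, Finset.sum_boole, Finset.filter_mem_eq_inter,
    Finset.inter_self, Nat.cast_id]

lemma IsAP.neg {Λ : Set ℤ} (hΛ : IsAP Λ) : IsAP (-Λ) := by
  refine ⟨fun h => hΛ.1 ?_, fun a b c d ha hb hc hd => ?_⟩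
  · rw [← neg_neg Λ, h, Set.neg_univ]
  · obtain ⟨x, hx, y, hy, hxy⟩ := hΛ.2 _ _ _ _ ha hb hc hd
    exact ⟨-x, by simpa using hx, -y, by simpa using hy, by linarith⟩

lemma isAP_singleton_s9 (c : ℤ) : IsAP {c} := by
  refine ⟨fun h => ?_, fun a b x y ha hb hx hy => ⟨c, rfl, c, rfl, ?_⟩⟩
  · have : c + 1 ∈ ({c} : Set ℤ) := h ▸ Set.mem_univ _
    simp at this
  · simp only [Set.mem_singleton_iff] at ha hb hx hy
    omega

lemma isAP_upRay (d c : ℤ) : IsAP {x | d ∣ x - c ∧ c ≤ x} := by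
  refine ⟨fun h => ?_, fun x₁ x₂ x₃ x₄ h₁ h₂ h₃ h₄ => ?_⟩
  · have : c - 1 ∈ {x | d ∣ x - c ∧ c ≤ x} := h ▸ Set.mem_univ _
    simp at this
  · have hD : d ∣ (x₁ - x₂) + (x₃ - x₄) := by
      have := (h₁.1.sub h₂.1).add (h₃.1.sub h₄.1)
      rwa [sub_sub_sub_cancel_right, sub_sub_sub_cancel_right] at this
    rcases le_total 0 ((x₁ - x₂) + (x₃ - x₄)) with hpos | hneg
    · exact ⟨c + ((x₁ - x₂) + (x₃ - x₄)), ⟨by simpa using hD, by linarith⟩, c,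
        ⟨by simp, le_rfl⟩, by ring⟩
    · exact ⟨c, ⟨by simp, le_rfl⟩, c - ((x₁ - x₂) + (x₃ - x₄)),
        ⟨by simpa using hD.neg_right, by linarith⟩, by ring⟩

lemma isAP_downRay (d c : ℤ) : IsAP {x | d ∣ x - c ∧ x ≤ c} := by
  convert (isAP_upRay d (-c)).neg using 1
  ext x
  simp only [Set.mem_ofPred_eq, Set.mem_neg, show -x - -c = -(x - c) by ring, dvd_neg,
    neg_le_neg_iff]

lemma kLinked_of_addCells {P Q : ℕ → ℕ} {Λ : Set ℤ} {S : Finset ℕ} {k : ℕ}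
    (hP : IsPartition P) (hΛ : IsAP Λ) (hQ : ∀ r, Q r = if r ∈ S then P r + 1 else P r)
    (hup : ∀ r, r ∈ S ↔ ((P r : ℤ) - r ∈ Λ ∧ (r = 0 ∨ P r < P (r - 1))))
    (hdown : ∀ r ∉ S, ¬ ((Q r : ℤ) - r - 1 ∈ Λ ∧ Q (r + 1) < Q r)) (hk : S.card = k) :
    KLinked k P Q := by
  refine ⟨⟨Λ, hΛ, funext fun r => ?_, funext fun r => ?_⟩,
    hk ▸ psum_of_addCells hP.support_finite hQ⟩
  · by_cases hr : r ∈ S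
    · rw [upDisp, hQ, if_pos hr, if_pos ((hup r).mp hr)]
    · rw [upDisp, hQ, if_neg hr, if_neg (mt (hup r).mpr hr)]
  · by_cases hr : r ∈ S
    · have hQr : Q r = P r + 1 := by rw [hQ, if_pos hr]
      have hmem : (Q r : ℤ) - r - 1 ∈ Λ := by
        rw [hQr, Nat.cast_succ, add_sub_right_comm, add_sub_cancel_right]
        exact ((hup r).mp hr).1
      have hlt : Q (r + 1) < Q r := by
        rw [hQ, hQr]
        split_ifs with hr'
        · simpa using ((hup (r + 1)).mp hr').2
        · exact Nat.lt_succ_of_le (hP.1 r)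
      rw [downDisp, if_pos ⟨hmem, hlt⟩, hQr, Nat.add_sub_cancel]
    · rw [downDisp, if_neg (hdown r hr), hQ, if_neg hr]

def ReachableWithin (c : ℕ) (P : ℕ → ℕ) : Prop :=
  ∃ n s, ValidSeq n s ∧ s 0 = (fun _ => 0) ∧ s n = P ∧
    ((Finset.range n).filter fun j => KLinked 1 (s j) (s (j + 1))).card ≤ c

lemma delta_le_of_reachableWithin {c : ℕ} {P : ℕ → ℕ} (h : ReachableWithin c P) :
    delta P ≤ c := by
  obtain ⟨n, s, hs, h0, hn, hc⟩ := h
  exact le_trans (Nat.sInf_le ⟨n, s, hs, h0, hn, rfl⟩) hc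

lemma reachableWithin_zero : ReachableWithin 0 (fun _ => 0) := by
  refine ⟨0, fun _ _ => 0, ⟨fun _ _ => ?_, fun _ h => absurd h (Nat.not_lt_zero _)⟩,
    rfl, rfl, by simp⟩
  exact ⟨fun _ => le_rfl, 0, fun _ _ => rfl⟩

namespace ReachableWithin

variable {c : ℕ} {P Q : ℕ → ℕ}

lemma snoc (h : ReachableWithin c P) (hQ : IsPartition Q)
    (hPQ : KLinked 1 P Q ∨ KLinked 2 P Q) :
    ReachableWithin (c + if KLinked 1 P Q then 1 else 0) Q := by
  obtain ⟨n, s, ⟨hpart, hlink⟩, h0, hn, hc⟩ := h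
  set s' : ℕ → ℕ → ℕ := fun m => if m ≤ n then s m else Q
  have hs' : ∀ m ≤ n, s' m = s m := fun m hm => if_pos hm
  have hs'n : s' (n + 1) = Q := if_neg (by omega)
  refine ⟨n + 1, s', ⟨fun m hm => ?_, fun m hm => ?_⟩, by rw [hs' 0 (by omega), h0], hs'n,
    ?_⟩
  · rcases Nat.lt_or_eq_of_le hm with hm | rfl
    · rw [hs' m (by omega)]; exact hpart m (by omega)
    · rwa [hs'n]
  · rcases Nat.lt_or_eq_of_le (Nat.le_of_lt_succ hm) with hm | rfl
    · rw [hs' m (by omega), hs' (m + 1) hm]; exact hlink m hm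
    · rwa [hs' m le_rfl, hs'n, hn]
  · rw [Finset.card_filter, Finset.sum_range_succ, hs' n le_rfl, hs'n, hn, ← Finset.card_filter]
    rw [Finset.filter_congr fun m hm => by
      rw [hs' m (by simp at hm; omega), hs' (m + 1) (by simp at hm; omega)]]
    omega

lemma of_kLinked_one (h : ReachableWithin c P) (hQ : IsPartition Q) (hPQ : KLinked 1 P Q) :
    ReachableWithin (c + 1) Q := by
  simpa [hPQ] using h.snoc hQ (Or.inl hPQ)

lemma of_kLinked_two (h : ReachableWithin c P) (hQ : IsPartition Q) (hPQ : KLinked 2 P Q) :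
    ReachableWithin c Q := by
  have h1 : ¬ KLinked 1 P Q := fun h1 => by have := h1.2.symm.trans hPQ.2; omega
  simpa [h1] using h.snoc hQ (Or.inr hPQ)

lemma of_chain_one {f : ℕ → ℕ → ℕ} {m : ℕ} (h : ReachableWithin c (f 0))
    (hf : ∀ k < m, IsPartition (f (k + 1)) ∧ KLinked 1 (f k) (f (k + 1))) :
    ReachableWithin (c + m) (f m) := by
  induction m with
  | zero => exact h
  | succ m ih =>
    obtain ⟨hpart, hlink⟩ := hf m (by omega)
    exact (ih fun k hk => hf k (by omega)).of_kLinked_one hpart hlink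

lemma of_chain_two {f : ℕ → ℕ → ℕ} {m : ℕ} (h : ReachableWithin c (f 0))
    (hf : ∀ k < m, IsPartition (f (k + 1)) ∧ KLinked 2 (f k) (f (k + 1))) :
    ReachableWithin c (f m) := by
  induction m with
  | zero => exact h
  | succ m ih =>
    obtain ⟨hpart, hlink⟩ := hf m (by omega)
    exact (ih fun k hk => hf k (by omega)).of_kLinked_two hpart hlink

end ReachableWithin

def box (b w : ℕ) : ℕ → ℕ := fun r => if r < b then w else 0

def colWave (b j t : ℕ) : ℕ → ℕ :=
  fun r => if r < t then j + 2 else if r = t then j + 1 else if r < b then j else 0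

lemma isPartition_box (b w : ℕ) : IsPartition (box b w) :=
  ⟨fun r => by simp only [box]; split_ifs <;> omega,
    b, fun r hr => by simp only [box]; split_ifs <;> omega⟩

lemma isPartition_colWave (b j t : ℕ) : IsPartition (colWave b j t) :=
  ⟨fun r => by simp only [colWave]; split_ifs <;> omega,
    b + t + 1, fun r hr => by simp only [colWave]; split_ifs <;> omega⟩

lemma box_kLinked_colWave (b j : ℕ) (hb : 1 ≤ b) : KLinked 1 (box b j) (colWave b j 0) := by
  refine kLinked_of_addCells (S := {0}) (Λ := {(j : ℤ)}) (isPartition_box b j) (isAP_singleton_s9 _)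
    (fun r => ?_) (fun r => ?_) (fun r hr => ?_) rfl
  all_goals simp only [box, colWave, Finset.mem_singleton, Set.mem_singleton_iff] at *
  all_goals split_ifs <;> omega

lemma colWave_kLinked_box (b j : ℕ) (hb : 1 ≤ b) :
    KLinked 1 (colWave b j (b - 1)) (box b (j + 2)) := by
  refine kLinked_of_addCells (S := {b - 1}) (Λ := {(j : ℤ) + 1 - (b - 1 : ℕ)})
    (isPartition_colWave b j _) (isAP_singleton_s9 _)
    (fun r => ?_) (fun r => ?_) (fun r hr => ?_) rfl
  all_goals simp only [box, colWave, Finset.mem_singleton, Set.mem_singleton_iff] at *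
  all_goals split_ifs <;> omega

lemma colWave_kLinked_succ (b j t : ℕ) (ht : t + 2 ≤ b) (hj : j = 0 ∨ (Odd b ∧ Even j)) :
    KLinked 2 (colWave b j t) (colWave b j (t + 1)) := by
  replace hj : j = 0 ∨ (b % 2 = 1 ∧ j % 2 = 0) := by
    simpa [Nat.odd_iff, Nat.even_iff] using hj
  -- The new cells have contents `c` and `c - 2`. For even `t` the ray rises, away from the cell
  -- below the box, and misses the end of row `0` by parity; for odd `t` it is the other way round.
  set c : ℤ := j + 1 - t
  obtain ht' | ht' := Nat.mod_two_eq_zero_or_one t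
  · refine kLinked_of_addCells (S := {t, t + 1}) (Λ := {x | 2 ∣ x - (c - 2) ∧ c - 2 ≤ x})
      (isPartition_colWave b j t) (isAP_upRay _ _)
      (fun r => ?_) (fun r => ?_) (fun r hr => ?_) (Finset.card_pair (by omega))
    all_goals simp only [c, colWave, Finset.mem_insert, Finset.mem_singleton, Set.mem_ofPred_eq]
      at *
    all_goals split_ifs <;> omega
  · refine kLinked_of_addCells (S := {t, t + 1}) (Λ := {x | 2 ∣ x - c ∧ x ≤ c})
      (isPartition_colWave b j t) (isAP_downRay _ _)
      (fun r => ?_) (fun r => ?_) (fun r hr => ?_) (Finset.card_pair (by omega))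
    all_goals simp only [c, colWave, Finset.mem_insert, Finset.mem_singleton, Set.mem_ofPred_eq]
      at *
    all_goals split_ifs <;> omega

def rowWave (A i p : ℕ) : ℕ → ℕ :=
  fun r => if r < i then A else if r = i then p else if r = i + 1 then p - 1 else 0

lemma isPartition_rowWave (A i p : ℕ) (hp : p ≤ A) : IsPartition (rowWave A i p) :=
  ⟨fun r => by simp only [rowWave]; split_ifs <;> omega,
    i + 2, fun r hr => by simp only [rowWave]; split_ifs <;> omega⟩

lemma box_kLinked_rowWave (A i : ℕ) (hA : 1 ≤ A) : KLinked 1 (box i A) (rowWave A i 1) := by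
  refine kLinked_of_addCells (S := {i}) (Λ := {-(i : ℤ)}) (isPartition_box i A)
    (isAP_singleton_s9 _) (fun r => ?_) (fun r => ?_) (fun r hr => ?_) rfl
  all_goals simp only [box, rowWave, Finset.mem_singleton, Set.mem_singleton_iff] at *
  all_goals split_ifs <;> omega

lemma rowWave_kLinked_box (A i : ℕ) (hA : 1 ≤ A) :
    KLinked 1 (rowWave A i A) (box (i + 2) A) := by
  refine kLinked_of_addCells (S := {i + 1}) (Λ := {(A : ℤ) - i - 2})
    (isPartition_rowWave A i A le_rfl) (isAP_singleton_s9 _)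
    (fun r => ?_) (fun r => ?_) (fun r hr => ?_) rfl
  all_goals simp only [box, rowWave, Finset.mem_singleton, Set.mem_singleton_iff] at *
  all_goals split_ifs <;> omega

lemma rowWave_kLinked_succ (A i p : ℕ) (hA : Odd A) (hi : Even i) (hp : 1 ≤ p) (hpA : p < A) :
    KLinked 2 (rowWave A i p) (rowWave A i (p + 1)) := by
  rw [Nat.odd_iff] at hA
  rw [Nat.even_iff] at hi
  set c : ℤ := p - i
  obtain hp' | hp' := Nat.mod_two_eq_zero_or_one p
  · refine kLinked_of_addCells (S := {i, i + 1}) (Λ := {x | 2 ∣ x - (c - 2) ∧ c - 2 ≤ x})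
      (isPartition_rowWave A i p hpA.le) (isAP_upRay _ _)
      (fun r => ?_) (fun r => ?_) (fun r hr => ?_) (Finset.card_pair (by omega))
    all_goals simp only [c, rowWave, Finset.mem_insert, Finset.mem_singleton, Set.mem_ofPred_eq]
      at *
    all_goals split_ifs <;> omega
  · refine kLinked_of_addCells (S := {i, i + 1}) (Λ := {x | 2 ∣ x - c ∧ x ≤ c})
      (isPartition_rowWave A i p hpA.le) (isAP_downRay _ _)
      (fun r => ?_) (fun r => ?_) (fun r hr => ?_) (Finset.card_pair (by omega))
    all_goals simp only [c, rowWave, Finset.mem_insert, Finset.mem_singleton, Set.mem_ofPred_eq]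
      at *
    all_goals split_ifs <;> omega

def colFill (b a k : ℕ) : ℕ → ℕ := fun r => if r < k then a else if r < b then a - 1 else 0

lemma isPartition_colFill (b a k : ℕ) : IsPartition (colFill b a k) :=
  ⟨fun r => by simp only [colFill]; split_ifs <;> omega,
    b + k, fun r hr => by simp only [colFill]; split_ifs <;> omega⟩

lemma colFill_kLinked_succ (b a k : ℕ) (ha : 1 ≤ a) (hk : k < b) :
    KLinked 1 (colFill b a k) (colFill b a (k + 1)) := by
  refine kLinked_of_addCells (S := {k}) (Λ := {(a : ℤ) - 1 - k})
    (isPartition_colFill b a k) (isAP_singleton_s9 _)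
    (fun r => ?_) (fun r => ?_) (fun r hr => ?_) rfl
  all_goals simp only [colFill, Finset.mem_singleton, Set.mem_singleton_iff] at *
  all_goals split_ifs <;> omega

lemma box_zero_width (b : ℕ) : box b 0 = fun _ => 0 := by
  funext r; simp [box]

lemma box_zero_height (w : ℕ) : box 0 w = fun _ => 0 := by
  funext r; simp [box]

namespace ReachableWithin

variable {c : ℕ}

lemma add_two_columns {b j : ℕ} (h : ReachableWithin c (box b j)) (hb : 1 ≤ b)
    (hj : j = 0 ∨ (Odd b ∧ Even j)) : ReachableWithin (c + 2) (box b (j + 2)) := by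
  have hstart := h.of_kLinked_one (isPartition_colWave b j 0)
    (box_kLinked_colWave b j hb)
  have hwave : ReachableWithin (c + 1) (colWave b j (b - 1)) :=
    hstart.of_chain_two fun t ht =>
      ⟨isPartition_colWave b j (t + 1), colWave_kLinked_succ b j t (by omega) hj⟩
  exact hwave.of_kLinked_one (isPartition_box b (j + 2)) (colWave_kLinked_box b j hb)

lemma add_two_rows {i A : ℕ} (h : ReachableWithin c (box i A)) (hi : Even i) (hA : Odd A) :
    ReachableWithin (c + 2) (box (i + 2) A) := by
  have hA1 : 1 ≤ A := hA.pos
  have hstart := h.of_kLinked_one (isPartition_rowWave A i 1 hA1) (box_kLinked_rowWave A i hA1)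
  have hwave : ReachableWithin (c + 1) (rowWave A i (A - 1 + 1)) :=
    hstart.of_chain_two (f := fun p => rowWave A i (p + 1)) fun p hp =>
      ⟨isPartition_rowWave A i (p + 2) (by omega),
        rowWave_kLinked_succ A i (p + 1) hA hi (by omega) (by omega)⟩
  rw [Nat.sub_add_cancel hA1] at hwave
  exact hwave.of_kLinked_one (isPartition_box (i + 2) A) (rowWave_kLinked_box A i hA1)

lemma fill_last_column {b a : ℕ} (h : ReachableWithin c (box b (a - 1))) (ha : 1 ≤ a) :
    ReachableWithin (c + b) (box b a) := by
  have hstart : colFill b a 0 = box b (a - 1) := by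
    funext r; simp only [colFill, box]; split_ifs <;> omega
  have hend : colFill b a b = box b a := by
    funext r; simp only [colFill, box]; split_ifs <;> omega
  rw [← hstart] at h
  rw [← hend]
  exact h.of_chain_one fun k hk =>
    ⟨isPartition_colFill b a (k + 1), colFill_kLinked_succ b a k ha hk⟩

end ReachableWithin

lemma reachableWithin_box_of_odd_height {b w : ℕ} (hb : Odd b) (hw : Even w) :
    ReachableWithin w (box b w) := by
  obtain ⟨m, rfl⟩ := hw
  induction m with
  | zero => simpa [box_zero_width] using reachableWithin_zero
  | succ m ih =>
    simpa [← add_assoc, add_right_comm] using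
      ih.add_two_columns hb.pos (Or.inr ⟨hb, ⟨m, rfl⟩⟩)

lemma reachableWithin_box_two {b : ℕ} (hb : 1 ≤ b) : ReachableWithin 2 (box b 2) := by
  have h0 : ReachableWithin 0 (box b 0) := box_zero_width b ▸ reachableWithin_zero
  exact h0.add_two_columns hb (Or.inl rfl)

lemma reachableWithin_box_of_odd_width {b w : ℕ} (hb : Even b) (hw : Odd w) :
    ReachableWithin b (box b w) := by
  obtain ⟨m, rfl⟩ := hb
  induction m with
  | zero => simpa [box_zero_height] using reachableWithin_zero
  | succ m ih =>
    simpa [← add_assoc, add_right_comm] using ih.add_two_rows ⟨m, rfl⟩ hw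

/-- Difficulty bound for box-shaped partitions with even `a`: `δ((a^b)) ≤ a + 2b - 4`. -/
theorem stmt9 (a b : ℕ) (ha : 2 ≤ a) (haeven : Even a) (hb : 2 ≤ b) :
    delta (fun n => if n < b then a else 0) ≤ a + 2 * b - 4 := by
  change delta (box b a) ≤ _
  rcases Nat.even_or_odd b with hbe | hbo
  · rcases eq_or_ne a 2 with rfl | ha2
    · exact (delta_le_of_reachableWithin (reachableWithin_box_two (by omega))).trans (by omega)
    · have ha4 : 4 ≤ a := by obtain ⟨m, rfl⟩ := haeven; omega
      have hodd : Odd (a - 1) := Nat.Even.sub_odd (by omega) haeven odd_one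
      have h := (reachableWithin_box_of_odd_width hbe hodd).fill_last_column (by omega)
      exact (delta_le_of_reachableWithin h).trans (by omega)
  · exact (delta_le_of_reachableWithin (reachableWithin_box_of_odd_height hbo haeven)).trans
      (by omega)
end
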